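/- Let Sh(k,l) denote the set of (k,l)-shuffles in the symmetric group S_{k+l} and for σ ∈ Sh(k,l) let m_k(σ) = max{i ∈ [k] : σ(1)=1,…,σ(i)=i} (0 if σ(1)≠1). In the Com-PreLie bialgebra T(V,f) defined by x₁…xₘ • y₁…yₙ = Σᵢ x₁…x_{i-1}f(xᵢ)(x_{i+1}…xₘ ⧢ y₁…yₙ), one has for v₁,…,v_{k+l} ∈ V: v₁…vₖ • v_{k+1}…v_{k+l} = Σ_{σ∈Sh(k,l)} Σ_{i=1}^{m_k(σ)} (Id^{⊗(i-1)}⊗f⊗Id^{⊗(k+l-i)})(v_{σ⁻¹(1)}…v_{σ⁻¹(k+l)}). -/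

import Mathlib

open TensorProduct

/-- The word `x₁…xₙ` in the tensor algebra. -/
noncomputable def word {K V : Type*} [CommRing K] [AddCommGroup V] [Module K V]
    (l : List V) : TensorAlgebra K V :=
  (l.map (TensorAlgebra.ι K)).prod

/-- `σ` is a `(k,l)`-shuffle: increasing on the first `k` positions and on the
last `l` positions. -/
def IsShuffle (k l : ℕ) (σ : Equiv.Perm (Fin (k + l))) : Prop :=
  (∀ i j : Fin (k + l), i < j → (j : ℕ) < k → σ i < σ j) ∧
  (∀ i j : Fin (k + l), i < j → k ≤ (i : ℕ) → σ i < σ j)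

/-- `m_k(σ)`: the largest `m ≤ k` such that `σ` fixes the first `m` positions
(`0` if `σ` does not fix the first position). -/
noncomputable def mk' (k l : ℕ) (σ : Equiv.Perm (Fin (k + l))) : ℕ :=
  ((Finset.range (k + 1)).filter
    (fun m => ∀ j : Fin (k + l), (j : ℕ) < m → σ j = j)).sup id

/-!
For `q ≤ k ≤ n` let `S(n, k, q)` (`IsShuffleFixing n k q`) be the set of `(k, n - k)`-shuffles
fixing every position below `q`. When `q < k < n`, each `σ ∈ S(n, k, q)` either fixes `q`, i.e.
lies in `S(n, k, q + 1)`, or sends `k` to `q`; composing with the cycle `(q q+1 … k)` identifies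
the latter ones with `S(n, k + 1, q + 1)` acting on the word in which the letter at position `k`
has been moved to position `q`. This is the recursion
`sh (x u) (y w) = x sh u (y w) + y sh (x u) w`, so by induction on `n - q` the words permuted by
`S(n, k, q)` sum to `u₀ ⋯ u_{q-1} · sh (u_q ⋯ u_{k-1}) (u_k ⋯ u_{n-1})`.

The term of `v₁…v_k • v_{k+1}…v_{k+l}` in which `f` hits the letter at position `p` (counting
from `0`) is this sum for `q = p + 1`, and `σ ∈ S(k + l, k, p + 1)` exactly when `p < m_k(σ)`.
-/

open Equiv Finset

structure IsShuffleFixing (n k q : ℕ) (σ : Perm (Fin n)) : Prop where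
  lt_of_lt_left : ∀ i j : Fin n, i < j → (j : ℕ) < k → σ i < σ j
  lt_of_lt_right : ∀ i j : Fin n, i < j → k ≤ (i : ℕ) → σ i < σ j
  apply_eq_self : ∀ j : Fin n, (j : ℕ) < q → σ j = j

theorem isShuffleFixing_one {n k q : ℕ} : IsShuffleFixing n k q 1 :=
  ⟨fun _ _ h _ => h, fun _ _ h _ => h, fun _ _ => rfl⟩

namespace IsShuffleFixing
variable {n k q : ℕ} {σ : Perm (Fin n)}

theorem le_apply (hσ : IsShuffleFixing n k q σ) {t : Fin n} (ht : q ≤ t) :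
    q ≤ (σ t : ℕ) := by
  by_contra! h
  have : σ t = t := σ.injective (hσ.apply_eq_self _ h)
  omega

theorem eq_one (hσ : IsShuffleFixing n k q σ) (h : k ≤ q ∨ n ≤ k) : σ = 1 := by
  suffices hmono : StrictMono σ from Perm.ext fun _ => hmono.apply_eq
  intro i j hij
  have := hσ.lt_of_lt_left i j hij
  have := hσ.lt_of_lt_right i j hij
  have := hσ.apply_eq_self i
  have := hσ.apply_eq_self j
  have := hσ.le_apply (t := j)
  grind

theorem apply_eq_or_apply_eq {a b : Fin n} (hab : a < b) (hσ : IsShuffleFixing n b a σ) :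
    σ a = a ∨ σ b = a := by
  obtain ⟨t, ht⟩ := σ.surjective a
  have := hσ.lt_of_lt_left a t
  have := hσ.lt_of_lt_right b t
  have := hσ.apply_eq_self t
  have := hσ.le_apply (le_refl a)
  have := hσ.le_apply hab.le
  grind

theorem apply_right_eq_iff {a b : Fin n} (hab : a < b)
    (hσ : IsShuffleFixing n b a σ) : σ b = a ↔ ¬σ a = a := by
  refine ⟨fun hb ha => hab.ne (σ.injective (ha.trans hb.symm)), fun ha => ?_⟩
  exact (hσ.apply_eq_or_apply_eq hab).resolve_left ha

theorem val_inv_apply_eq_iff (hσ : IsShuffleFixing n k q σ) {p : ℕ} (hp : p < q) {j : Fin n} :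
    (σ⁻¹ j : ℕ) = p ↔ (j : ℕ) = p := by
  constructor
  · intro h
    rw [← h, ← hσ.apply_eq_self (σ⁻¹ j) (by omega)]
    simp
  · intro h
    rwa [Perm.inv_eq_iff_eq.2 (hσ.apply_eq_self j (by omega)).symm]

end IsShuffleFixing

section
variable {n k : ℕ} {σ : Perm (Fin n)}

theorem isShuffleFixing_succ_iff (a : Fin n) :
    IsShuffleFixing n k (a + 1 : ℕ) σ ↔ IsShuffleFixing n k a σ ∧ σ a = a := by
  constructor
  · intro h
    exact ⟨⟨h.lt_of_lt_left, h.lt_of_lt_right, fun j hj => h.apply_eq_self j (by omega)⟩,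
      h.apply_eq_self a (by omega)⟩
  · rintro ⟨h, ha⟩
    refine ⟨h.lt_of_lt_left, h.lt_of_lt_right, fun j hj => ?_⟩
    rcases (Nat.lt_succ_iff_lt_or_eq.1 hj) with hj | hj
    · exact h.apply_eq_self j hj
    · rwa [Fin.ext hj]

theorem val_cycleIcc_apply {a b : Fin n} (hab : a ≤ b) (x : Fin n) :
    (Fin.cycleIcc a b x : ℕ) =
      if x = b then (a : ℕ) else if a ≤ x ∧ x < b then (x : ℕ) + 1 else x := by
  have : NeZero n := ⟨by omega⟩
  rcases lt_or_ge x a with hxa | hax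
  · rw [Fin.cycleIcc_of_lt hxa]; grind
  rcases le_or_gt x b with hxb | hbx
  · rw [Fin.cycleIcc_of_le_of_le hax hxb]
    split_ifs <;> grind [Fin.val_add_one_of_lt']
  · rw [Fin.cycleIcc_of_gt hbx]; grind

theorem val_cycleIcc_inv_apply {a b : Fin n} (hab : a ≤ b) (x : Fin n) :
    ((Fin.cycleIcc a b)⁻¹ x : ℕ) =
      if x = a then (b : ℕ) else if a < x ∧ x ≤ b then (x : ℕ) - 1 else x := by
  set y := (Fin.cycleIcc a b)⁻¹ x
  have hx : x = Fin.cycleIcc a b y := by simp [y]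
  have := val_cycleIcc_apply hab y
  grind

theorem isShuffleFixing_mul_cycleIcc_iff {a b : Fin n} (hab : a < b) {τ : Perm (Fin n)} :
    IsShuffleFixing n (b + 1 : ℕ) (a + 1 : ℕ) τ ↔
      IsShuffleFixing n b a (τ * Fin.cycleIcc a b) ∧ τ a = a := by
  set c := Fin.cycleIcc a b
  constructor
  · intro hτ
    refine ⟨⟨fun i j hij hj => ?_, fun i j hij hi => ?_, fun j hj => ?_⟩,
      hτ.apply_eq_self a (by omega)⟩ <;> simp only [Perm.mul_apply]
    · have := hτ.lt_of_lt_left (c i) (c j)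
      have := hτ.apply_eq_self (c i)
      have := fun h => hτ.le_apply (t := c j) h
      have := val_cycleIcc_apply hab.le i
      have := val_cycleIcc_apply hab.le j
      grind
    · have := hτ.lt_of_lt_right (c i) (c j)
      have := hτ.apply_eq_self (c i)
      have := fun h => hτ.le_apply (t := c j) h
      have := val_cycleIcc_apply hab.le i
      have := val_cycleIcc_apply hab.le j
      grind
    · have := hτ.apply_eq_self (c j)
      have := val_cycleIcc_apply hab.le j
      grind
  · rintro ⟨hσ, hτa⟩
    have hτ : ∀ x, τ x = (τ * c) (c⁻¹ x) := fun x => by simp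
    have hca : c⁻¹ a = b := Fin.ext (by rw [val_cycleIcc_inv_apply hab.le, if_pos rfl])
    have hτb : (τ * c) b = a := by rw [← hτa, hτ, hca]
    refine ⟨fun i j hij hj => ?_, fun i j hij hi => ?_, fun j hj => ?_⟩
    · rw [hτ i, hτ j]
      have := hσ.lt_of_lt_left (c⁻¹ i) (c⁻¹ j)
      have := hσ.apply_eq_self (c⁻¹ i)
      have := fun h => hσ.le_apply (t := c⁻¹ j) h
      have := val_cycleIcc_inv_apply hab.le i
      have := val_cycleIcc_inv_apply hab.le j
      have := (τ * c).injective.eq_iff (a := c⁻¹ j) (b := b)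
      grind
    · rw [hτ i, hτ j]
      have := hσ.lt_of_lt_right (c⁻¹ i) (c⁻¹ j)
      have := hσ.apply_eq_self (c⁻¹ i)
      have := fun h => hσ.le_apply (t := c⁻¹ j) h
      have := val_cycleIcc_inv_apply hab.le i
      have := val_cycleIcc_inv_apply hab.le j
      grind
    · rw [hτ j]
      have := hσ.apply_eq_self (c⁻¹ j)
      have := val_cycleIcc_inv_apply hab.le j
      grind

open Classical in
theorem sum_isShuffleFixing_eq_add {M : Type*} [AddCommMonoid M] (F : Perm (Fin n) → M)
    {a b : Fin n} (hab : a < b) :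
    ∑ σ with IsShuffleFixing n b a σ, F σ =
      ∑ σ with IsShuffleFixing n b (a + 1 : ℕ) σ, F σ +
        ∑ τ with IsShuffleFixing n (b + 1 : ℕ) (a + 1 : ℕ) τ,
          F (τ * Fin.cycleIcc a b) := by
  rw [← sum_filter_add_sum_filter_not _ (fun σ => σ a = a), filter_filter, filter_filter]
  congr 1
  · simp only [isShuffleFixing_succ_iff]
  · symm
    refine sum_equiv (Equiv.mulRight (Fin.cycleIcc a b)) (fun τ => ?_) (fun _ _ => rfl)
    have : NeZero n := ⟨by omega⟩
    have hb : (τ * Fin.cycleIcc a b) b = τ a := by simp [Fin.cycleIcc_of_last hab.le]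
    simp only [mem_filter, mem_univ, true_and, Equiv.coe_mulRight,
      isShuffleFixing_mul_cycleIcc_iff hab]
    constructor
    · rintro ⟨hσ, hτa⟩
      exact ⟨hσ, (hσ.apply_right_eq_iff hab).1 (hb.trans hτa)⟩
    · rintro ⟨hσ, hne⟩
      exact ⟨hσ, hb.symm.trans ((hσ.apply_right_eq_iff hab).2 hne)⟩

end

theorem lt_mk'_iff {k l : ℕ} {σ : Perm (Fin (k + l))} {p : ℕ} :
    p < mk' k l σ ↔ p < k ∧ ∀ j : Fin (k + l), (j : ℕ) < p + 1 → σ j = j := by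
  simp only [mk', Finset.lt_sup_iff, mem_filter, mem_range, id]
  constructor
  · rintro ⟨m, ⟨hm, hfix⟩, hpm⟩
    exact ⟨by omega, fun j hj => hfix j (by omega)⟩
  · rintro ⟨hpk, hfix⟩
    exact ⟨p + 1, ⟨by omega, hfix⟩, by omega⟩

theorem isShuffleFixing_iff {k l q : ℕ} {σ : Perm (Fin (k + l))} :
    IsShuffleFixing (k + l) k q σ ↔
      IsShuffle k l σ ∧ ∀ j : Fin (k + l), (j : ℕ) < q → σ j = j :=
  ⟨fun h => ⟨⟨h.1, h.2⟩, h.3⟩, fun h => ⟨h.1.1, h.1.2, h.2⟩⟩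

open Classical in
theorem sum_isShuffle_sum_range_mk' {M : Type*} [AddCommMonoid M] (k l : ℕ)
    (F : Perm (Fin (k + l)) → ℕ → M) :
    ∑ σ, (if IsShuffle k l σ then ∑ p ∈ range (mk' k l σ), F σ p else 0) =
      ∑ p ∈ range k, ∑ σ with IsShuffleFixing (k + l) k (p + 1) σ, F σ p := by
  simp only [sum_filter]
  rw [sum_comm]
  refine sum_congr rfl fun σ _ => ?_
  split_ifs with hσ
  · have hrange : range (mk' k l σ) =
        (range k).filter fun p => ∀ j : Fin (k + l), (j : ℕ) < p + 1 → σ j = j := by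
      ext p
      simp only [mem_range, mem_filter, lt_mk'_iff]
    rw [hrange, sum_filter]
    simp only [isShuffleFixing_iff, hσ, true_and]
  · simp [isShuffleFixing_iff, hσ]

theorem ofFn_eq_map_range' {α : Type*} {a n : ℕ} {g : Fin n → α} {u : ℕ → α}
    (h : ∀ i : Fin n, g i = u (a + i)) : List.ofFn g = (List.range' a n).map u := by
  apply List.ext_getElem <;> simp [h]

theorem map_range'_congr {α : Type*} {u u' : ℕ → α} {s m : ℕ}
    (h : ∀ t, s ≤ t → t < s + m → u t = u' t) :
    (List.range' s m).map u = (List.range' s m).map u' :=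
  List.map_congr_left fun t ht => h t (List.mem_range'_1.1 ht).1 (List.mem_range'_1.1 ht).2

theorem sum_take_get_drop_map_range' {α M : Type*} [AddCommMonoid M] (u : ℕ → α) (k : ℕ)
    (G : List α → α → List α → M) :
    ∑ i : Fin ((List.range' 0 k).map u).length,
        G (((List.range' 0 k).map u).take i) (((List.range' 0 k).map u).get i)
          (((List.range' 0 k).map u).drop (i + 1)) =
      ∑ p ∈ range k,
        G ((List.range' 0 p).map u) (u p) ((List.range' (p + 1) (k - (p + 1))).map u) := by
  have hget : ∀ i, ((List.range' 0 k).map u).get i = u i := fun i => by simp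
  simp only [hget]
  rw [Fin.sum_univ_eq_sum_range (fun p => G (((List.range' 0 k).map u).take p) (u p)
    (((List.range' 0 k).map u).drop (p + 1))), List.length_map, List.length_range']
  refine sum_congr rfl fun p hp => ?_
  rw [← List.map_take, ← List.map_drop, List.take_range'_of_length_ge (mem_range.1 hp).le]
  simp [List.drop_range']

section ShuffleWord
variable {K V : Type*} [CommRing K] [AddCommGroup V] [Module K V] {n : ℕ}

theorem word_append (xs ys : List V) : word (K := K) (xs ++ ys) = word xs * word ys := by
  simp [word]

theorem word_map_range'_eq_mul (u : ℕ → V) {s e : ℕ} (h : s < e) :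
    word (K := K) ((List.range' s (e - s)).map u) =
      TensorAlgebra.ι K (u s) * word ((List.range' (s + 1) (e - (s + 1))).map u) := by
  rw [show e - s = e - (s + 1) + 1 by omega, List.range'_succ]
  simp [word]

theorem word_map_range'_succ (u : ℕ → V) (s m : ℕ) :
    word (K := K) ((List.range' s (m + 1)).map u) =
      word ((List.range' s m).map u) * TensorAlgebra.ι K (u (s + m)) := by
  rw [List.range'_1_concat, List.map_append, word_append]
  simp [word]

open Classical in
theorem sum_isShuffleFixing_word_of_le_or_le (u : ℕ → V) {k q : ℕ} (hqn : q ≤ n)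
    (h : k ≤ q ∨ n ≤ k) :
    ∑ σ with IsShuffleFixing n k q σ, word (K := K) (List.ofFn fun j => u (σ⁻¹ j)) =
      word ((List.range' 0 q).map u) * word ((List.range' q (n - q)).map u) := by
  have hone : ({σ | IsShuffleFixing n k q σ} : Finset (Perm (Fin n))) = {1} := by
    ext σ
    simp only [mem_filter, mem_univ, true_and, mem_singleton]
    exact ⟨fun hσ => hσ.eq_one h, fun hσ => hσ ▸ isShuffleFixing_one⟩
  have hsplit : List.range' 0 n = List.range' 0 q ++ List.range' q (n - q) := by
    simpa [Nat.add_sub_cancel' hqn] using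
      (List.range'_append_1 (s := 0) (m := q) (n := n - q)).symm
  rw [hone, sum_singleton, ← word_append, ← List.map_append, ← hsplit,
    ofFn_eq_map_range' (a := 0) (u := u) (fun i => by simp)]

open Classical in
theorem sum_isShuffleFixing_word
    (sh : TensorAlgebra K V → TensorAlgebra K V → TensorAlgebra K V)
    (hshone : ∀ u, sh 1 u = u) (hshone' : ∀ u, sh u 1 = u)
    (hshcons : ∀ (x y : V) (u w : TensorAlgebra K V),
      sh (TensorAlgebra.ι K x * u) (TensorAlgebra.ι K y * w) =
        TensorAlgebra.ι K x * sh u (TensorAlgebra.ι K y * w)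
        + TensorAlgebra.ι K y * sh (TensorAlgebra.ι K x * u) w)
    (u : ℕ → V) {q k : ℕ} (hqk : q ≤ k) (hkn : k ≤ n) :
    ∑ σ with IsShuffleFixing n k q σ, word (K := K) (List.ofFn fun j => u (σ⁻¹ j)) =
      word ((List.range' 0 q).map u) *
        sh (word ((List.range' q (k - q)).map u)) (word ((List.range' k (n - k)).map u)) := by
  rcases hqk.eq_or_lt with rfl | hqk
  · rw [sum_isShuffleFixing_word_of_le_or_le u hkn (.inl le_rfl), Nat.sub_self, List.range'_zero,
      List.map_nil]
    exact (congrArg _ (hshone _)).symm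
  rcases hkn.eq_or_lt with rfl | hkn
  · rw [sum_isShuffleFixing_word_of_le_or_le u hqk.le (.inr le_rfl), Nat.sub_self,
      List.range'_zero, List.map_nil]
    exact (congrArg _ (hshone' _)).symm
  set a : Fin n := ⟨q, by omega⟩
  set b : Fin n := ⟨k, hkn⟩
  have hab : a < b := hqk
  set u' : ℕ → V := fun t => u (if t = q then k else if q < t ∧ t ≤ k then t - 1 else t)
  have hu' : ∀ τ : Perm (Fin n), List.ofFn (fun j => u ((τ * Fin.cycleIcc a b)⁻¹ j)) =
      List.ofFn fun j => u' (τ⁻¹ j) := by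
    intro τ
    congr 1
    funext j
    rw [mul_inv_rev, Perm.mul_apply, val_cycleIcc_inv_apply hab.le]
    simp only [u', Fin.ext_iff, Fin.lt_def, Fin.le_def, a, b]
  rw [sum_isShuffleFixing_eq_add _ hab]
  simp only [hu']
  rw [sum_isShuffleFixing_word sh hshone hshone' hshcons u (q := q + 1) hqk hkn.le,
    sum_isShuffleFixing_word sh hshone hshone' hshcons u' (q := q + 1) (k := k + 1) (by omega) hkn]
  have hprefix : word (K := K) ((List.range' 0 (q + 1)).map u') =
      word ((List.range' 0 q).map u) * TensorAlgebra.ι K (u k) := by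
    rw [word_map_range'_succ, map_range'_congr (u' := u) fun t _ ht => by simp only [u']; grind]
    simp [u']
  have hleft : word (K := K) ((List.range' (q + 1) (k + 1 - (q + 1))).map u') =
      word ((List.range' q (k - q)).map u) := by
    rw [Nat.add_sub_add_right, List.range'_succ_left, List.map_map,
      map_range'_congr (u' := u) fun t ht ht' => by simp only [u', Function.comp_apply]; grind]
  have hright : word (K := K) ((List.range' (k + 1) (n - (k + 1))).map u') =
      word ((List.range' (k + 1) (n - (k + 1))).map u) := by
    rw [map_range'_congr (u' := u) fun t ht _ => by simp only [u']; grind]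
  rw [word_map_range'_succ, hprefix, hleft, hright, word_map_range'_eq_mul u hqk,
    word_map_range'_eq_mul u hkn, hshcons]
  noncomm_ring
termination_by n - q

open Classical in
theorem sum_isShuffleFixing_word_update
    (sh : TensorAlgebra K V → TensorAlgebra K V → TensorAlgebra K V)
    (hshone : ∀ u, sh 1 u = u) (hshone' : ∀ u, sh u 1 = u)
    (hshcons : ∀ (x y : V) (u w : TensorAlgebra K V),
      sh (TensorAlgebra.ι K x * u) (TensorAlgebra.ι K y * w) =
        TensorAlgebra.ι K x * sh u (TensorAlgebra.ι K y * w)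
        + TensorAlgebra.ι K y * sh (TensorAlgebra.ι K x * u) w)
    (u : ℕ → V) (x : V) {p k : ℕ} (hpk : p < k) (hkn : k ≤ n) :
    ∑ σ with IsShuffleFixing n k (p + 1) σ,
        word (K := K) (List.ofFn fun j => Function.update u p x (σ⁻¹ j)) =
      word ((List.range' 0 p).map u) * (TensorAlgebra.ι K x *
        sh (word ((List.range' (p + 1) (k - (p + 1))).map u))
          (word ((List.range' k (n - k)).map u))) := by
  have hupdate : ∀ s m, p < s ∨ s + m ≤ p →
      (List.range' s m).map (Function.update u p x) = (List.range' s m).map u :=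
    fun s m h => map_range'_congr fun t ht ht' => Function.update_of_ne (by omega) _ _
  rw [sum_isShuffleFixing_word sh hshone hshone' hshcons _ hpk hkn, word_map_range'_succ,
    hupdate _ _ (.inr (Nat.zero_add p).le), hupdate _ _ (.inl p.lt_succ_self),
    hupdate _ _ (.inl (by omega)), mul_assoc]
  simp

end ShuffleWord

open Classical in
theorem bullet_shuffle_formula_general {K V : Type*} [Field K]
    [AddCommGroup V] [Module K V]
    (sh : TensorAlgebra K V →ₗ[K] TensorAlgebra K V →ₗ[K] TensorAlgebra K V)
    (hshone : ∀ u, sh 1 u = u) (hshone' : ∀ u, sh u 1 = u)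
    (hshcons : ∀ (x y : V) (u w : TensorAlgebra K V),
      sh (TensorAlgebra.ι K x * u) (TensorAlgebra.ι K y * w) =
        TensorAlgebra.ι K x * sh u (TensorAlgebra.ι K y * w)
        + TensorAlgebra.ι K y * sh (TensorAlgebra.ι K x * u) w)
    (f : V →ₗ[K] V)
    (B : TensorAlgebra K V →ₗ[K] TensorAlgebra K V →ₗ[K] TensorAlgebra K V)
    (hB : ∀ (xs ys : List V),
      B (word (K := K) xs) (word (K := K) ys) =
        ∑ i : Fin xs.length,
          word (K := K) (xs.take i) *
            (TensorAlgebra.ι K (f (xs.get i)) *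
              sh (word (K := K) (xs.drop (i + 1))) (word (K := K) ys))) :
    ∀ (k l : ℕ) (v : Fin (k + l) → V),
      B (word (K := K) (List.ofFn fun i : Fin k => v (Fin.castAdd l i)))
        (word (K := K) (List.ofFn fun i : Fin l => v (Fin.natAdd k i))) =
        ∑ σ : Equiv.Perm (Fin (k + l)),
          if IsShuffle k l σ then
            ∑ p ∈ Finset.range (mk' k l σ),
              word (K := K) (List.ofFn fun j : Fin (k + l) =>
                if (j : ℕ) = p then f (v (σ⁻¹ j)) else v (σ⁻¹ j))
          else 0 := by
  intro k l v
  set u : ℕ → V := fun t => if h : t < k + l then v ⟨t, h⟩ else 0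
  have hv : ∀ j : Fin (k + l), v j = u j := fun j => by simp [u]
  rw [ofFn_eq_map_range' (a := 0) (u := u) fun i => by simp [hv],
    ofFn_eq_map_range' (a := k) (u := u) fun i => by simp [hv], hB,
    sum_take_get_drop_map_range' u k fun xs x ys => word xs * (TensorAlgebra.ι K (f x) *
      sh (word ys) (word ((List.range' k l).map u))),
    sum_isShuffle_sum_range_mk']
  refine sum_congr rfl fun p hp => ?_
  have hterm := sum_isShuffleFixing_word_update (fun x y => sh x y) hshone hshone' hshcons u
    (f (u p)) (mem_range.1 hp) (Nat.le_add_right k l)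
  rw [Nat.add_sub_cancel_left] at hterm
  rw [← hterm]
  refine sum_congr rfl fun σ hσ => ?_
  have hσ := (mem_filter.1 hσ).2
  congr 2
  funext j
  have hfix := hσ.val_inv_apply_eq_iff p.lt_succ_self (j := j)
  by_cases hj : (j : ℕ) = p
  · rw [Function.update_apply, if_pos (hfix.2 hj), if_pos hj, hv, hfix.2 hj]
  · rw [Function.update_apply, if_neg (mt hfix.1 hj), if_neg hj, hv]

open Classical in
/-- Explicit formula for the preLie product of `T(V,f)` in terms of
`(k,l)`-shuffles:
`v₁…vₖ • v_{k+1}…v_{k+l} = Σ_{σ∈Sh(k,l)} Σ_{i=1}^{m_k(σ)}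
  (Id^{⊗(i-1)}⊗f⊗Id^{⊗(k+l-i)})(v_{σ⁻¹(1)}…v_{σ⁻¹(k+l)})`. -/
theorem bullet_shuffle_formula {K V : Type*} [Field K] [CharZero K]
    [AddCommGroup V] [Module K V]
    (sh : TensorAlgebra K V →ₗ[K] TensorAlgebra K V →ₗ[K] TensorAlgebra K V)
    (hshone : ∀ u, sh 1 u = u) (hshone' : ∀ u, sh u 1 = u)
    (hshcons : ∀ (x y : V) (u w : TensorAlgebra K V),
      sh (TensorAlgebra.ι K x * u) (TensorAlgebra.ι K y * w) =
        TensorAlgebra.ι K x * sh u (TensorAlgebra.ι K y * w)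
        + TensorAlgebra.ι K y * sh (TensorAlgebra.ι K x * u) w)
    (f : V →ₗ[K] V)
    (B : TensorAlgebra K V →ₗ[K] TensorAlgebra K V →ₗ[K] TensorAlgebra K V)
    (hB : ∀ (xs ys : List V),
      B (word (K := K) xs) (word (K := K) ys) =
        ∑ i : Fin xs.length,
          word (K := K) (xs.take i) *
            (TensorAlgebra.ι K (f (xs.get i)) *
              sh (word (K := K) (xs.drop (i + 1))) (word (K := K) ys))) :
    ∀ (k l : ℕ) (v : Fin (k + l) → V),
      B (word (K := K) (List.ofFn fun i : Fin k => v (Fin.castAdd l i)))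
        (word (K := K) (List.ofFn fun i : Fin l => v (Fin.natAdd k i))) =
        ∑ σ : Equiv.Perm (Fin (k + l)),
          if IsShuffle k l σ then
            ∑ p ∈ Finset.range (mk' k l σ),
              word (K := K) (List.ofFn fun j : Fin (k + l) =>
                if (j : ℕ) = p then f (v (σ⁻¹ j)) else v (σ⁻¹ j))
          else 0 :=
  bullet_shuffle_formula_general sh hshone hshone' hshcons f B hB
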